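/- Let u, v ∈ A₁ with u' ≠ α v' in the sense that u' and v' are not a.e. proportional. Then F((u+v)/2)^{1/p} < ½ F(u)^{1/p} + ½ F(v)^{1/p}, where F(w) = ∫₀¹ |w'|₂^p. -/

import Mathlib

open MeasureTheory Set

/-- `u` lies in `W^{1,p}((0,1))` with weak derivative `u'`, represented by its
continuous (absolutely continuous) representative. -/
def IsW1p (p : ℝ) (u u' : ℝ → ℝ) : Prop :=
  MemLp u (ENNReal.ofReal p) (volume.restrict (Ioo (0:ℝ) 1)) ∧
  MemLp u' (ENNReal.ofReal p) (volume.restrict (Ioo (0:ℝ) 1)) ∧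
  ContinuousOn u (Icc (0:ℝ) 1) ∧
  ∀ x ∈ Icc (0:ℝ) 1, u x = u 0 + ∫ t in (0:ℝ)..x, u' t

/-- Membership in the constraint set `A₁`. -/
def MemA1 (p : ℝ) (u₁ u₂ u₁' u₂' : ℝ → ℝ) : Prop :=
  IsW1p p u₁ u₁' ∧ IsW1p p u₂ u₂' ∧
  (∀ᵐ x ∂(volume.restrict (Ioo (0:ℝ) 1)), (u₁ x) ^ 2 + (u₂ x) ^ 2 = 1) ∧
  u₁ 0 = 0 ∧ u₂ 0 = 1 ∧ u₁ 1 = 1 ∧ u₂ 1 = 0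

/-- The functional `F`, expressed through the weak derivatives. -/
noncomputable def FF (p : ℝ) (u₁' u₂' : ℝ → ℝ) : ℝ :=
  ∫ x in Ioo (0:ℝ) 1, ((u₁' x) ^ 2 + (u₂' x) ^ 2) ^ (p / 2)

/-! For `2 ≤ p`, Clarkson's inequality `‖f + g‖ᵖ + ‖f - g‖ᵖ ≤ 2ᵖ⁻¹ (‖f‖ᵖ + ‖g‖ᵖ)`, which holds
pointwise in an inner product space by the parallelogram law and the convexity of `t ↦ t^(p/2)`,
makes `Lᵖ` strictly convex. Since `F(w)^{1/p}` is the `Lᵖ` norm of `w' = (w₁', w₂')`, the claim is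
the strict triangle inequality for `u'` and `v'`: it applies because `u' ≠ 0` (as `u₁(0) ≠ u₁(1)`)
and `v'` is not a nonnegative multiple of `u'`. -/

open scoped ENNReal

section Clarkson

variable {E : Type*} [NormedAddCommGroup E] [InnerProductSpace ℝ E]

theorem norm_add_rpow_add_norm_sub_rpow_le {q : ℝ} (hq : 2 ≤ q) (x y : E) :
    ‖x + y‖ ^ q + ‖x - y‖ ^ q ≤ 2 ^ (q - 1) * (‖x‖ ^ q + ‖y‖ ^ q) := by
  have hr : 1 ≤ q / 2 := by linarith
  have rpow_eq : ∀ t : ℝ, 0 ≤ t → t ^ q = (t ^ 2) ^ (q / 2) := fun t ht => by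
    rw [← Real.rpow_natCast, ← Real.rpow_mul ht, Nat.cast_ofNat, mul_div_cancel₀ q two_ne_zero]
  have hpar : ‖x + y‖ ^ 2 + ‖x - y‖ ^ 2 = 2 * (‖x‖ ^ 2 + ‖y‖ ^ 2) := by
    have := parallelogram_law_with_norm ℝ x y; nlinarith
  have hconv : ((‖x‖ ^ 2 + ‖y‖ ^ 2) / 2) ^ (q / 2)
      ≤ ((‖x‖ ^ 2) ^ (q / 2) + (‖y‖ ^ 2) ^ (q / 2)) / 2 := by
    have := (convexOn_rpow hr).2 (sq_nonneg ‖x‖) (sq_nonneg ‖y‖)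
      (by norm_num : (0:ℝ) ≤ 1 / 2) (by norm_num : (0:ℝ) ≤ 1 / 2) (add_halves 1)
    simp only [smul_eq_mul] at this
    calc ((‖x‖ ^ 2 + ‖y‖ ^ 2) / 2) ^ (q / 2) = (1 / 2 * ‖x‖ ^ 2 + 1 / 2 * ‖y‖ ^ 2) ^ (q / 2) := by
          ring_nf
      _ ≤ _ := this
      _ = _ := by ring
  rw [rpow_eq _ (norm_nonneg _), rpow_eq _ (norm_nonneg _), rpow_eq _ (norm_nonneg x),
    rpow_eq _ (norm_nonneg y)]
  calc (‖x + y‖ ^ 2) ^ (q / 2) + (‖x - y‖ ^ 2) ^ (q / 2)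
      ≤ (‖x + y‖ ^ 2 + ‖x - y‖ ^ 2) ^ (q / 2) :=
        Real.add_rpow_le_rpow_add (by positivity) (by positivity) hr
    _ = 2 ^ q * ((‖x‖ ^ 2 + ‖y‖ ^ 2) / 2) ^ (q / 2) := by
        rw [hpar, rpow_eq 2 zero_le_two, ← Real.mul_rpow (by positivity) (by positivity)]
        ring_nf
    _ ≤ 2 ^ q * (((‖x‖ ^ 2) ^ (q / 2) + (‖y‖ ^ 2) ^ (q / 2)) / 2) := by gcongr
    _ = 2 ^ (q - 1) * ((‖x‖ ^ 2) ^ (q / 2) + (‖y‖ ^ 2) ^ (q / 2)) := by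
        rw [Real.rpow_sub_one two_ne_zero]; ring

end Clarkson

namespace MeasureTheory

variable {α E : Type*} [MeasurableSpace α] {μ : Measure α} [NormedAddCommGroup E]

theorem MemLp.norm_toLp_eq_integral_rpow {p : ℝ} (hp : 0 < p) {f : α → E}
    (hf : MemLp f (ENNReal.ofReal p) μ) :
    ‖hf.toLp f‖ = (∫ x, ‖f x‖ ^ p ∂μ) ^ (1 / p) := by
  rw [Lp.norm_toLp, hf.eLpNorm_eq_integral_rpow_norm (by simpa using hp) ENNReal.ofReal_ne_top,
    ENNReal.toReal_ofReal hp.le, ENNReal.toReal_ofReal (by positivity), one_div]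

theorem MemLp.euclidean_pair {q : ℝ≥0∞} {a b : α → ℝ} (ha : MemLp a q μ) (hb : MemLp b q μ) :
    MemLp (fun x => !₂[a x, b x]) q μ :=
  MemLp.of_eval_piLp (Fin.forall_fin_two.2 ⟨by simpa using ha, by simpa using hb⟩)

theorem MemLp.not_sameRay_toLp_pair {q : ℝ≥0∞} {a b c d : α → ℝ}
    (hab : MemLp (fun x => !₂[a x, b x]) q μ) (hcd : MemLp (fun x => !₂[c x, d x]) q μ)
    (hab0 : hab.toLp _ ≠ 0) (h : ¬ ∃ r : ℝ, ∀ᵐ x ∂μ, c x = r * a x ∧ d x = r * b x) :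
    ¬ SameRay ℝ (hab.toLp _) (hcd.toLp _) := by
  intro hsame
  obtain ⟨r, -, hr⟩ := hsame.exists_nonneg_left hab0
  rw [← MemLp.toLp_const_smul, MemLp.toLp_eq_toLp_iff] at hr
  refine h ⟨r, ?_⟩
  filter_upwards [hr] with x hx
  exact ⟨by simpa using (congrArg (· 0) hx).symm, by simpa using (congrArg (· 1) hx).symm⟩

namespace Lp

variable {p : ℝ≥0∞}

theorem norm_rpow_toReal_eq_integral (hp : p ≠ 0) (hp_top : p ≠ ∞) (f : Lp E p μ) :
    ‖f‖ ^ p.toReal = ∫ x, ‖f x‖ ^ p.toReal ∂μ := by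
  rw [norm_def, (Lp.memLp f).eLpNorm_eq_integral_rpow_norm hp hp_top,
    ENNReal.toReal_ofReal (by positivity), ← Real.rpow_mul (integral_nonneg fun _ => by positivity),
    inv_mul_cancel₀ (ENNReal.toReal_pos hp hp_top).ne', Real.rpow_one]

variable [InnerProductSpace ℝ E]

theorem norm_add_rpow_add_norm_sub_rpow_le (hp : 2 ≤ p) (hp_top : p ≠ ∞) (f g : Lp E p μ) :
    ‖f + g‖ ^ p.toReal + ‖f - g‖ ^ p.toReal
      ≤ 2 ^ (p.toReal - 1) * (‖f‖ ^ p.toReal + ‖g‖ ^ p.toReal) := by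
  have hp0 : p ≠ 0 := (lt_of_lt_of_le two_pos hp).ne'
  have hq : 2 ≤ p.toReal := by simpa using ENNReal.toReal_mono hp_top hp
  have hint : ∀ h : Lp E p μ, Integrable (fun x => ‖h x‖ ^ p.toReal) μ :=
    fun h => (Lp.memLp h).integrable_norm_rpow hp0 hp_top
  simp only [norm_rpow_toReal_eq_integral hp0 hp_top]
  rw [← integral_add (hint _) (hint _), ← integral_add (hint _) (hint _), ← integral_const_mul]
  refine integral_mono_ae ((hint _).add (hint _)) (((hint _).add (hint _)).const_mul _) ?_
  filter_upwards [coeFn_add f g, coeFn_sub f g] with x hadd hsub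
  simp only [Pi.add_apply, hadd, hsub, Pi.sub_apply]
  exact _root_.norm_add_rpow_add_norm_sub_rpow_le hq (f x) (g x)

theorem strictConvexSpace [Fact (1 ≤ p)] (hp : 2 ≤ p) (hp_top : p ≠ ∞) :
    StrictConvexSpace ℝ (Lp E p μ) := by
  refine StrictConvexSpace.of_norm_add_ne_two fun f g hf hg hfg => ?_
  have hq : 0 < p.toReal := ENNReal.toReal_pos (lt_of_lt_of_le two_pos hp).ne' hp_top
  have hclarkson := norm_add_rpow_add_norm_sub_rpow_le hp hp_top f g
  rw [hf, hg, Real.one_rpow, one_add_one_eq_two, ← Real.rpow_add_one two_ne_zero,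
    sub_add_cancel] at hclarkson
  have hsub : 0 < ‖f - g‖ ^ p.toReal := Real.rpow_pos_of_pos (norm_pos_iff.2 (sub_ne_zero.2 hfg)) _
  have hlt : ‖f + g‖ ^ p.toReal < 2 ^ p.toReal := by linarith
  exact ((Real.rpow_lt_rpow_iff (norm_nonneg _) zero_le_two hq).1 hlt).ne

end Lp

end MeasureTheory

theorem EuclideanSpace.norm_pair_rpow (p a b : ℝ) : ‖!₂[a, b]‖ ^ p = (a ^ 2 + b ^ 2) ^ (p / 2) := by
  rw [EuclideanSpace.norm_eq, Fin.sum_univ_two, Real.sqrt_eq_rpow, ← Real.rpow_mul (by positivity)]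
  simp [sq_abs, div_eq_inv_mul]

theorem FF_rpow_one_div_eq_norm_toLp {p : ℝ} (hp : 0 < p) {a b : ℝ → ℝ}
    (hab : MemLp (fun x => !₂[a x, b x]) (ENNReal.ofReal p) (volume.restrict (Ioo (0:ℝ) 1))) :
    FF p a b ^ (1 / p) = ‖hab.toLp _‖ := by
  simp only [hab.norm_toLp_eq_integral_rpow hp, FF, EuclideanSpace.norm_pair_rpow]

theorem FF_midpoint_rpow_one_div_eq_norm_toLp {p : ℝ} (hp : 0 < p) {a b c d : ℝ → ℝ}
    (hab : MemLp (fun x => !₂[a x, b x]) (ENNReal.ofReal p) (volume.restrict (Ioo (0:ℝ) 1)))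
    (hcd : MemLp (fun x => !₂[c x, d x]) (ENNReal.ofReal p) (volume.restrict (Ioo (0:ℝ) 1))) :
    FF p (fun x => (a x + c x) / 2) (fun x => (b x + d x) / 2) ^ (1 / p)
      = ‖(2⁻¹ : ℝ) • (hab.toLp _ + hcd.toLp _)‖ := by
  rw [← MemLp.toLp_add, ← MemLp.toLp_const_smul, MemLp.norm_toLp_eq_integral_rpow hp, FF]
  congr! 3 with x
  rw [← EuclideanSpace.norm_pair_rpow]
  congr 2
  ext i
  fin_cases i <;> simp <;> ring

theorem IsW1p.not_deriv_ae_eq_zero {p : ℝ} {w w' : ℝ → ℝ} (hw : IsW1p p w w') (h : w 0 ≠ w 1) :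
    ¬ w' =ᵐ[volume.restrict (Ioo (0:ℝ) 1)] 0 := by
  intro hzero
  have hint : ∫ t in (0:ℝ)..1, w' t = 0 := by
    rw [intervalIntegral.integral_of_le zero_le_one, integral_Ioc_eq_integral_Ioo,
      integral_congr_ae hzero]
    simp
  exact h (by simpa [hint] using (hw.2.2.2 1 (by norm_num)).symm)

theorem MemA1.memLp_deriv {p : ℝ} {u₁ u₂ u₁' u₂' : ℝ → ℝ} (hu : MemA1 p u₁ u₂ u₁' u₂') :
    MemLp (fun x => !₂[u₁' x, u₂' x]) (ENNReal.ofReal p) (volume.restrict (Ioo (0:ℝ) 1)) :=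
  hu.1.2.1.euclidean_pair hu.2.1.2.1

theorem MemA1.toLp_deriv_ne_zero {p : ℝ} {u₁ u₂ u₁' u₂' : ℝ → ℝ} (hu : MemA1 p u₁ u₂ u₁' u₂') :
    hu.memLp_deriv.toLp _ ≠ 0 := by
  intro h
  have hzero : (fun x => !₂[u₁' x, u₂' x]) =ᵐ[volume.restrict (Ioo (0:ℝ) 1)] 0 := by
    rw [← MemLp.toLp_eq_toLp_iff hu.memLp_deriv MemLp.zero, h, MemLp.toLp_zero]
  obtain ⟨hu₁, -, -, hu₁0, -, hu₁1, -⟩ := hu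
  refine hu₁.not_deriv_ae_eq_zero (by simp [hu₁0, hu₁1]) ?_
  filter_upwards [hzero] with x hx
  simpa using congrArg (· 0) hx

theorem strict_convexity_at_nonproportional (p : ℝ) (hp : 2 ≤ p)
    (u₁ u₂ v₁ v₂ u₁' u₂' v₁' v₂' : ℝ → ℝ)
    (hu : MemA1 p u₁ u₂ u₁' u₂') (hv : MemA1 p v₁ v₂ v₁' v₂')
    (hnp : ¬ ∃ α : ℝ, ∀ᵐ x ∂(volume.restrict (Ioo (0:ℝ) 1)),
      v₁' x = α * u₁' x ∧ v₂' x = α * u₂' x) :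
    (FF p (fun x => (u₁' x + v₁' x) / 2) (fun x => (u₂' x + v₂' x) / 2)) ^ (1 / p)
      < (1 / 2) * (FF p u₁' u₂') ^ (1 / p) + (1 / 2) * (FF p v₁' v₂') ^ (1 / p) := by
  have hp0 : 0 < p := by linarith
  have : Fact (1 ≤ ENNReal.ofReal p) := ⟨by simp; linarith⟩
  have : StrictConvexSpace ℝ
      (Lp (EuclideanSpace ℝ (Fin 2)) (ENNReal.ofReal p) (volume.restrict (Ioo (0:ℝ) 1))) :=
    Lp.strictConvexSpace (by simpa using ENNReal.ofReal_le_ofReal hp) ENNReal.ofReal_ne_top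
  have hnot_sameRay :=
    hu.memLp_deriv.not_sameRay_toLp_pair hv.memLp_deriv hu.toLp_deriv_ne_zero hnp
  rw [FF_midpoint_rpow_one_div_eq_norm_toLp hp0 hu.memLp_deriv hv.memLp_deriv,
    FF_rpow_one_div_eq_norm_toLp hp0 hu.memLp_deriv,
    FF_rpow_one_div_eq_norm_toLp hp0 hv.memLp_deriv,
    norm_smul, Real.norm_of_nonneg (by norm_num)]
  linarith [norm_add_lt_of_not_sameRay hnot_sameRay]
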